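/- For each pair of reduced cyclic words 𝒲 and 𝒵 and each linked pair (P,Q) ∈ 𝕃ℙ₂(𝒲,𝒵), the cyclic word γ(P,Q) is a non-empty reduced cyclic word. -/

import Mathlib

/-! A representative of `γ(P,Q)` is a concatenation `V₁W₁` of freely reduced pieces of `𝒲` and
`𝒵`, so `γ(P,Q)` is reduced as soon as neither junction `V₁|W₁` nor `W₁|V₁` cancels.
In types (1) and (2), `V₁` and `W₁` begin with the last letters `p₂`, `q₂` of `P`, `Q` and end
with the letters preceding them. In type (1) these are `p₁`, `q₁`, and the junctions are safe
because `o ≠ 0` forces `p̄₁, q̄₁, p₂, q₂` to be distinct (`𝒪` repeats no letter); in type (2)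
both are the last letter of `Y`, and the junctions are those inside `P` and `Q`.
In type (3), `V₁` runs from `p₂` to `p₁` and `W₁` from `q₂` to `q₁`, and the junctions are
exactly the conditions `p₁ ≠ q̄₂`, `p₂ ≠ q̄₁`. -/

open List

namespace CyclicWords

/-- A letter of the alphabet `𝔸ₙ = {a₁,…,aₙ, ā₁,…,āₙ}`: a generator index together
with a Boolean recording whether the letter is barred. -/
abbrev Letter (n : ℕ) := Bool × Fin n

/-- The involution `x ↦ x̄` on letters. -/
def Letter.bar {n : ℕ} (x : Letter n) : Letter n := (!x.1, x.2)

/-- A linear word: a finite sequence of letters. -/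
abbrev Word (n : ℕ) := List (Letter n)

/-- `W̄ = x̄ₘ ⋯ x̄₁ x̄₀` for `W = x₀x₁⋯xₘ`. -/
def Word.bar {n : ℕ} (W : Word n) : Word n := (W.map Letter.bar).reverse

/-- `Wᵏ`, the concatenation of `k` copies of `W`. -/
def wpow {n : ℕ} (W : Word n) (k : ℕ) : Word n := (List.replicate k W).flatten

/-- A linear word is freely reduced when consecutive letters are never inverse
to each other. -/
def FreelyReduced {n : ℕ} (W : Word n) : Prop :=
  W.Chain' (fun a b => b ≠ Letter.bar a)

/-- A cyclic word: an equivalence class of linear words under cyclic rotation. -/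
abbrev CWord (n : ℕ) := Cycle (Letter n)

/-- `c(W)`, the cyclic word represented by the linear word `W`. -/
def cyc {n : ℕ} (W : Word n) : CWord n := ↑W

/-- The length of a cyclic word. -/
def clen {n : ℕ} (𝒲 : CWord n) : ℕ := 𝒲.length

/-- A cyclic word is reduced if it is non-empty and all of its linear
representatives are freely reduced. -/
def CReduced {n : ℕ} (𝒲 : CWord n) : Prop :=
  𝒲 ≠ Cycle.nil ∧ ∀ W : Word n, cyc W = 𝒲 → FreelyReduced W

/-- `P` is a (linear) subword of the cyclic word `𝒲`, i.e. a linear subword of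
one of its linear representatives. -/
def Subword {n : ℕ} (P : Word n) (𝒲 : CWord n) : Prop :=
  ∃ W : Word n, cyc W = 𝒲 ∧ P <:+: W

/-- `P` is a subword of the power `𝒲ʲ`. -/
def SubwordPow {n : ℕ} (P : Word n) (𝒲 : CWord n) (j : ℕ) : Prop :=
  ∃ W : Word n, cyc W = 𝒲 ∧ P <:+: wpow W j

/-- A surface symbol: a reduced cyclic word in which every letter of `𝔸ₙ`
appears exactly once. -/
def SurfaceSymbol {n : ℕ} (𝒪 : CWord n) : Prop :=
  CReduced 𝒪 ∧ ∃ O : Word n, cyc O = 𝒪 ∧ O.Nodup ∧ ∀ x : Letter n, x ∈ O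

/-- `𝒲` is reduced and its (distinct) letters embed into `𝒪` preserving the
cyclic order. -/
def OrientPos {n : ℕ} (𝒪 𝒲 : CWord n) : Prop :=
  CReduced 𝒲 ∧ ∃ W O : Word n, cyc W = 𝒲 ∧ cyc O = 𝒪 ∧ W.Sublist O

/-- `𝒲` is reduced and its (distinct) letters embed into `𝒪` reversing the
cyclic order. -/
def OrientNeg {n : ℕ} (𝒪 𝒲 : CWord n) : Prop :=
  CReduced 𝒲 ∧ ∃ W O : Word n, cyc W = 𝒲 ∧ cyc O = 𝒪 ∧ W.Sublist O.reverse

open Classical in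
/-- The number `o(𝒲) ∈ {-1,0,1}` associated to a cyclic word `𝒲`. -/
noncomputable def o {n : ℕ} (𝒪 𝒲 : CWord n) : ℤ :=
  if OrientPos 𝒪 𝒲 then 1 else if OrientNeg 𝒪 𝒲 then -1 else 0

/-- Condition (1) of the definition of `𝒪`-linked pairs. -/
def LinkedType1 {n : ℕ} (𝒪 : CWord n) (P Q : Word n) : Prop :=
  ∃ p₁ p₂ q₁ q₂ : Letter n, P = [p₁, p₂] ∧ Q = [q₁, q₂] ∧
    o 𝒪 (cyc [Letter.bar p₁, Letter.bar q₁, p₂, q₂]) ≠ 0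

/-- Condition (2) of the definition of `𝒪`-linked pairs (`x₁`, `x₂` denote the
first and last letters of `Y`). -/
def LinkedType2 {n : ℕ} (𝒪 : CWord n) (P Q : Word n) : Prop :=
  ∃ (p₁ p₂ q₁ q₂ : Letter n) (Y : Word n), Y ≠ [] ∧
    P = p₁ :: Y ++ [p₂] ∧ Q = q₁ :: Y ++ [q₂] ∧ p₁ ≠ q₁ ∧ p₂ ≠ q₂ ∧
    ∀ x₁ x₂ : Letter n, Y.head? = some x₁ → Y.getLast? = some x₂ →
      o 𝒪 (cyc [Letter.bar p₁, Letter.bar q₁, x₁]) = o 𝒪 (cyc [p₂, q₂, Letter.bar x₂])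

/-- Condition (3) of the definition of `𝒪`-linked pairs. -/
def LinkedType3 {n : ℕ} (𝒪 : CWord n) (P Q : Word n) : Prop :=
  ∃ (p₁ p₂ q₁ q₂ : Letter n) (Y : Word n), Y ≠ [] ∧
    P = p₁ :: Y ++ [p₂] ∧ Q = q₁ :: Word.bar Y ++ [q₂] ∧
    p₁ ≠ Letter.bar q₂ ∧ p₂ ≠ Letter.bar q₁ ∧
    ∀ x₁ x₂ : Letter n, Y.head? = some x₁ → Y.getLast? = some x₂ →
      o 𝒪 (cyc [q₂, Letter.bar p₁, x₁]) = o 𝒪 (cyc [Letter.bar q₁, p₂, Letter.bar x₂])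

/-- The ordered pair `(P,Q)` is `𝒪`-linked. -/
def IsLinked {n : ℕ} (𝒪 : CWord n) (P Q : Word n) : Prop :=
  FreelyReduced P ∧ FreelyReduced Q ∧ 2 ≤ P.length ∧ 2 ≤ Q.length ∧
    (LinkedType1 𝒪 P Q ∨ LinkedType2 𝒪 P Q ∨ LinkedType3 𝒪 P Q)

open Classical in
/-- The sign of a linked pair `(P,Q)`. -/
noncomputable def sign {n : ℕ} (𝒪 : CWord n) (P Q : Word n) : ℤ :=
  match P, Q with
  | p₁ :: ps, q₁ :: qs =>
    match ps.getLast?, qs.getLast?, ps.head? with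
    | some p₂, some q₂, some x₁ =>
      if LinkedType1 𝒪 (p₁ :: ps) (q₁ :: qs) then
        o 𝒪 (cyc [Letter.bar p₁, Letter.bar q₁, p₂, q₂])
      else if LinkedType2 𝒪 (p₁ :: ps) (q₁ :: qs) then
        o 𝒪 (cyc [Letter.bar p₁, Letter.bar q₁, x₁])
      else if LinkedType3 𝒪 (p₁ :: ps) (q₁ :: qs) then
        o 𝒪 (cyc [q₂, Letter.bar p₁, x₁])
      else 0
    | _, _, _ => 0
  | _, _ => 0

/-- `𝕃ℙ₁(𝒲)`: `(P,Q)` is an `𝒪`-linked pair of subwords of `𝒲`. -/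
def LP1 {n : ℕ} (𝒪 𝒲 : CWord n) (P Q : Word n) : Prop :=
  IsLinked 𝒪 P Q ∧ Subword P 𝒲 ∧ Subword Q 𝒲

/-- `𝕃ℙ₂(𝒱,𝒲)`: `(P,Q)` is an `𝒪`-linked pair with `P` a subword of `𝒱ʲ`,
`Q` a subword of `𝒲ᵏ` in the appropriate length windows. -/
def LP2 {n : ℕ} (𝒪 𝒱 𝒲 : CWord n) (P Q : Word n) : Prop :=
  IsLinked 𝒪 P Q ∧
    ∃ j k : ℕ, 0 < j ∧ 0 < k ∧ SubwordPow P 𝒱 j ∧ SubwordPow Q 𝒲 k ∧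
      (j - 1) * clen 𝒱 < P.length ∧ P.length ≤ j * clen 𝒱 ∧
      (k - 1) * clen 𝒲 < Q.length ∧ Q.length ≤ k * clen 𝒲

/-- The cut data for `δ` when `(P,Q)` has type (1) or (2): two cuts of `𝒲`
producing `W₁` (starting at the occurrence of `p₂`, the last letter of `P`) and
`W₂` (starting at the occurrence of `q₂`, the last letter of `Q`). -/
def DeltaPair12 {n : ℕ} (𝒪 𝒲 : CWord n) (P Q W₁ W₂ : Word n) : Prop :=
  (LinkedType1 𝒪 P Q ∨ LinkedType2 𝒪 P Q) ∧
  𝒲 = cyc (W₁ ++ W₂) ∧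
  (∃ (P' : Word n) (p₂ : Letter n), P = P' ++ [p₂] ∧ W₁.head? = some p₂ ∧
      P' <:+ W₁ ++ W₂) ∧
  (∃ (Q' : Word n) (q₂ : Letter n), Q = Q' ++ [q₂] ∧ W₂.head? = some q₂ ∧
      Q' <:+ W₂ ++ W₁)

/-- The cut data for `δ` when `(P,Q)` has type (3): `W₁` runs from `p₂` to
`q₁`, and `W₂` from `q₂` to `p₁`. -/
def DeltaPair3 {n : ℕ} (𝒪 𝒲 : CWord n) (P Q W₁ W₂ : Word n) : Prop :=
  LinkedType3 𝒪 P Q ∧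
  ∃ (p₁ p₂ q₁ q₂ : Letter n) (Y Y' : Word n), Y ≠ [] ∧ Y' ≠ [] ∧
    P = p₁ :: Y ++ [p₂] ∧ Q = q₁ :: Y' ++ [q₂] ∧
    W₁.head? = some p₂ ∧ W₁.getLast? = some q₁ ∧
    W₂.head? = some q₂ ∧ W₂.getLast? = some p₁ ∧
    𝒲 = cyc (W₁ ++ Y' ++ W₂ ++ Y)

/-- The words `W₁`, `W₂` obtained by cutting `𝒲` along the linked pair `(P,Q)`. -/
def DeltaPair {n : ℕ} (𝒪 𝒲 : CWord n) (P Q W₁ W₂ : Word n) : Prop :=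
  DeltaPair12 𝒪 𝒲 P Q W₁ W₂ ∨ DeltaPair3 𝒪 𝒲 P Q W₁ W₂

open Classical in
/-- A choice of the pair of linear words obtained by cutting `𝒲` along `(P,Q)`. -/
noncomputable def deltaW {n : ℕ} (𝒪 𝒲 : CWord n) (P Q : Word n) : Word n × Word n :=
  if h : ∃ W : Word n × Word n, DeltaPair 𝒪 𝒲 P Q W.1 W.2 then h.choose else ([], [])

/-- The cyclic word `δ₁(P,Q)`. -/
noncomputable def delta1 {n : ℕ} (𝒪 𝒲 : CWord n) (P Q : Word n) : CWord n :=
  cyc (deltaW 𝒪 𝒲 P Q).1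

/-- The cyclic word `δ₂(P,Q)`. -/
noncomputable def delta2 {n : ℕ} (𝒪 𝒲 : CWord n) (P Q : Word n) : CWord n :=
  cyc (deltaW 𝒪 𝒲 P Q).2

/-- `W₁` is the linear representative of `↑W₁` obtained by cutting immediately
before (the occurrence of) the last letter of `P`: `P` occurs (in a power)
ending exactly at the cut. -/
def CutEnds {n : ℕ} (W₁ P : Word n) : Prop :=
  ∃ (P' : Word n) (p₂ : Letter n) (j : ℕ),
    P = P' ++ [p₂] ∧ W₁.head? = some p₂ ∧ P' <:+ wpow W₁ j

/-- The data for `γ(P,Q)` when `(P,Q) ∈ 𝕃ℙ₂(𝒱,𝒲)` has type (1) or (2):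
`γ(P,Q) = c(V₁W₁)` where `V₁`, `W₁` are the representatives of `𝒱`, `𝒲` obtained
by cutting immediately before `p₂`, resp. `q₂`. -/
def GammaPair12 {n : ℕ} (𝒪 𝒱 𝒲 : CWord n) (P Q : Word n) (G : CWord n) : Prop :=
  (LinkedType1 𝒪 P Q ∨ LinkedType2 𝒪 P Q) ∧
  ∃ V₁ W₁ : Word n, cyc V₁ = 𝒱 ∧ cyc W₁ = 𝒲 ∧ CutEnds V₁ P ∧ CutEnds W₁ Q ∧
    G = cyc (V₁ ++ W₁)

/-- The data for `γ(P,Q)` when `(P,Q) ∈ 𝕃ℙ₂(𝒱,𝒲)` has type (3):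
`V₁` is the subword of `𝒱` starting right after the end of `Y` and ending right
before the first letter of `Y` (whose footprint in `𝒱` is the arc `U`), and
similarly `W₁` for `Ȳ` in `𝒲`; then `γ(P,Q) = c(V₁W₁)`. -/
def GammaPair3 {n : ℕ} (𝒪 𝒱 𝒲 : CWord n) (P Q : Word n) (G : CWord n) : Prop :=
  LinkedType3 𝒪 P Q ∧
  ∃ (p₁ p₂ q₁ q₂ : Letter n) (Y V₁ W₁ U U' : Word n) (j k : ℕ),
    P = p₁ :: Y ++ [p₂] ∧ Q = q₁ :: Word.bar Y ++ [q₂] ∧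
    V₁.head? = some p₂ ∧ V₁.getLast? = some p₁ ∧
    W₁.head? = some q₂ ∧ W₁.getLast? = some q₁ ∧
    𝒱 = cyc (U ++ V₁) ∧ Y <+: wpow (U ++ V₁) j ∧ Y.length % clen 𝒱 = U.length ∧
    𝒲 = cyc (U' ++ W₁) ∧ Word.bar Y <+: wpow (U' ++ W₁) k ∧
      (Word.bar Y).length % clen 𝒲 = U'.length ∧
    G = cyc (V₁ ++ W₁)

/-- `G` is the cyclic word `γ(P,Q)` associated to `(P,Q) ∈ 𝕃ℙ₂(𝒱,𝒲)`. -/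
def GammaPair {n : ℕ} (𝒪 𝒱 𝒲 : CWord n) (P Q : Word n) (G : CWord n) : Prop :=
  GammaPair12 𝒪 𝒱 𝒲 P Q G ∨ GammaPair3 𝒪 𝒱 𝒲 P Q G

open Classical in
/-- A choice of the cyclic word `γ(P,Q)` for `(P,Q) ∈ 𝕃ℙ₂(𝒱,𝒲)`. -/
noncomputable def gamma {n : ℕ} (𝒪 𝒱 𝒲 : CWord n) (P Q : Word n) : CWord n :=
  if h : ∃ G : CWord n, GammaPair 𝒪 𝒱 𝒲 P Q G then h.choose else Cycle.nil

/-- The set of non-empty reduced cyclic words, the basis of `𝕍`. -/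
def RedCyc (n : ℕ) := {𝒲 : CWord n // CReduced 𝒲}

instance {n : ℕ} [NeZero n] : Inhabited (RedCyc n) :=
  ⟨⟨cyc [default], by
    constructor
    · intro h
      have h' : ([(default : Letter n)] : Word n) = [] := (Cycle.coe_eq_nil _).mp h
      simp at h'
    · intro W hW
      have h1 : W ~r [(default : Letter n)] := Cycle.coe_eq_coe.mp hW
      have h2 : W = [(default : Letter n)] := List.perm_singleton.mp h1.perm
      rw [h2]
      exact List.IsChain.singleton _⟩⟩

open Classical in
/-- View a cyclic word as a basis element of `𝕍` (junk value if not reduced). -/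
noncomputable def toRed {n : ℕ} [NeZero n] (c : CWord n) : RedCyc n :=
  if h : CReduced c then ⟨c, h⟩ else default

theorem Letter.bar_bar {n : ℕ} (x : Letter n) : x.bar.bar = x := by
  simp [Letter.bar]

theorem Letter.ne_bar_comm {n : ℕ} {x y : Letter n} (h : x ≠ y.bar) : y ≠ x.bar := by
  rintro rfl
  exact h x.bar_bar.symm

theorem cons_append_singleton_inj {α : Type*} {a a' b b' : α} {l l' : List α}
    (h : a :: l ++ [b] = a' :: l' ++ [b']) : a = a' ∧ l = l' ∧ b = b' := by
  simpa using h

theorem _root_.List.IsRotated.infix_append_self {α : Type*} {l l' : List α} (h : l' ~r l) :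
    l' <:+: l ++ l := by
  obtain ⟨m, hm, rfl⟩ := isRotated_iff_mod.mp h.symm
  rw [rotate_eq_drop_append_take hm]
  exact ⟨take m l, drop m l, by
    simp only [append_assoc, take_append_drop]
    rw [← append_assoc, take_append_drop]⟩

theorem FreelyReduced.infix {n : ℕ} {V W : Word n} (hW : FreelyReduced W) (h : V <:+: W) :
    FreelyReduced V :=
  IsChain.infix hW h

theorem FreelyReduced.ne_bar_of_infix {n : ℕ} {W : Word n} {x y : Letter n}
    (hW : FreelyReduced W) (h : [x, y] <:+: W) : y ≠ x.bar :=
  (isChain_pair (R := fun a b : Letter n => b ≠ a.bar)).mp (hW.infix h)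

theorem creduced_cyc_of_freelyReduced_append_self {n : ℕ} {L : Word n} (hL : L ≠ [])
    (h : FreelyReduced (L ++ L)) : CReduced (cyc L) :=
  ⟨fun h0 => hL ((Cycle.coe_eq_nil L).mp h0),
    fun _ hW => h.infix (Cycle.coe_eq_coe.mp hW).infix_append_self⟩

theorem creduced_cyc_append {n : ℕ} {A B : Word n} {a₀ a₁ b₀ b₁ : Letter n}
    (hA : FreelyReduced A) (hB : FreelyReduced B)
    (hA₀ : A.head? = some a₀) (hA₁ : A.getLast? = some a₁)
    (hB₀ : B.head? = some b₀) (hB₁ : B.getLast? = some b₁)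
    (hab : b₀ ≠ a₁.bar) (hba : a₀ ≠ b₁.bar) : CReduced (cyc (A ++ B)) := by
  have hAne : A ≠ [] := by rintro rfl; simp at hA₀
  have hAB : FreelyReduced (A ++ B) := isChain_append.mpr ⟨hA, hB, by simp_all⟩
  refine creduced_cyc_of_freelyReduced_append_self (by simp [hAne])
    (isChain_append.mpr ⟨hAB, hAB, ?_⟩)
  simp_all

theorem getLast?_wpow {n : ℕ} {W : Word n} {j : ℕ} (h : wpow W j ≠ []) :
    (wpow W j).getLast? = W.getLast? := by
  cases j with
  | zero => simp [wpow] at h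
  | succ j =>
    have hW : W ≠ [] := by rintro rfl; simp [wpow] at h
    simp [wpow, replicate_succ', getLast?_append_of_ne_nil _ hW]

theorem CutEnds.head?_getLast? {n : ℕ} {V P : Word n} {x y : Letter n}
    (h : CutEnds V (P ++ [x, y])) : V.head? = some y ∧ V.getLast? = some x := by
  obtain ⟨P', p₂, j, hP, hV, t, ht⟩ := h
  obtain ⟨rfl, ⟨⟩⟩ : P ++ [x] = P' ∧ [y] = [p₂] := append_inj' (by simpa using hP) rfl
  refine ⟨hV, ?_⟩
  rw [← getLast?_wpow (W := V) (j := j) (by rw [← ht]; simp), ← ht]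
  simp

theorem SurfaceSymbol.nodup {n : ℕ} {𝒪 : CWord n} (h : SurfaceSymbol 𝒪) : 𝒪.Nodup := by
  obtain ⟨-, O, rfl, hO, -⟩ := h
  exact Cycle.nodup_coe_iff.mpr hO

theorem nodup_of_o_ne_zero {n : ℕ} {𝒪 𝒲 : CWord n} (h𝒪 : 𝒪.Nodup) (ho : o 𝒪 𝒲 ≠ 0) :
    𝒲.Nodup := by
  unfold o at ho
  split_ifs at ho with hpos hneg
  · obtain ⟨-, W, O, rfl, rfl, hWO⟩ := hpos
    exact Cycle.nodup_coe_iff.mpr (hWO.nodup (Cycle.nodup_coe_iff.mp h𝒪))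
  · obtain ⟨-, W, O, rfl, rfl, hWO⟩ := hneg
    exact Cycle.nodup_coe_iff.mpr (hWO.nodup (nodup_reverse.mpr (Cycle.nodup_coe_iff.mp h𝒪)))
  · exact absurd rfl ho

theorem exists_eq_append_pair_of_linkedType12 {n : ℕ} {𝒪 : CWord n} (h𝒪 : SurfaceSymbol 𝒪)
    {P Q : Word n} (hP : FreelyReduced P) (hQ : FreelyReduced Q)
    (hT : LinkedType1 𝒪 P Q ∨ LinkedType2 𝒪 P Q) :
    ∃ (P' Q' : Word n) (p p₂ q q₂ : Letter n), P = P' ++ [p, p₂] ∧ Q = Q' ++ [q, q₂] ∧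
      q₂ ≠ p.bar ∧ p₂ ≠ q.bar := by
  rcases hT with ⟨p₁, p₂, q₁, q₂, rfl, rfl, ho⟩ | ⟨p₁, p₂, q₁, q₂, Y, hY, rfl, rfl, -⟩
  · have hnd := Cycle.nodup_coe_iff.mp (nodup_of_o_ne_zero h𝒪.nodup ho)
    refine ⟨[], [], p₁, p₂, q₁, q₂, rfl, rfl, ?_, ?_⟩ <;> rintro rfl <;> simp at hnd
  · obtain ⟨Y', x, rfl⟩ : ∃ Y' x, Y = Y' ++ [x] :=
      ⟨Y.dropLast, Y.getLast hY, (dropLast_append_getLast hY).symm⟩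
    exact ⟨p₁ :: Y', q₁ :: Y', x, p₂, x, q₂, by simp, by simp,
      hQ.ne_bar_of_infix ⟨q₁ :: Y', [], by simp⟩, hP.ne_bar_of_infix ⟨p₁ :: Y', [], by simp⟩⟩

theorem GammaPair12.creduced {n : ℕ} {𝒪 𝒲 𝒵 G : CWord n} {P Q : Word n}
    (h𝒪 : SurfaceSymbol 𝒪) (h𝒲 : CReduced 𝒲) (h𝒵 : CReduced 𝒵)
    (hP : FreelyReduced P) (hQ : FreelyReduced Q) (hG : GammaPair12 𝒪 𝒲 𝒵 P Q G) :
    CReduced G := by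
  obtain ⟨hT, V₁, W₁, rfl, rfl, hV, hW, rfl⟩ := hG
  obtain ⟨P', Q', p, p₂, q, q₂, rfl, rfl, hpq, hqp⟩ :=
    exists_eq_append_pair_of_linkedType12 h𝒪 hP hQ hT
  obtain ⟨hV₀, hV₁⟩ := hV.head?_getLast?
  obtain ⟨hW₀, hW₁⟩ := hW.head?_getLast?
  exact creduced_cyc_append (h𝒲.2 V₁ rfl) (h𝒵.2 W₁ rfl) hV₀ hV₁ hW₀ hW₁ hpq hqp

theorem GammaPair3.creduced {n : ℕ} {𝒪 𝒲 𝒵 G : CWord n} {P Q : Word n}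
    (h𝒲 : CReduced 𝒲) (h𝒵 : CReduced 𝒵) (hG : GammaPair3 𝒪 𝒲 𝒵 P Q G) : CReduced G := by
  obtain ⟨⟨p₁', p₂', q₁', q₂', Y', -, hP', hQ', hpq, hqp, -⟩,
    p₁, p₂, q₁, q₂, Y, V₁, W₁, U, U', -, -, hP, hQ, hV₀, hV₁, hW₀, hW₁,
    rfl, -, -, rfl, -, -, rfl⟩ := hG
  obtain ⟨rfl, -, rfl⟩ := cons_append_singleton_inj (hP'.symm.trans hP)
  obtain ⟨rfl, -, rfl⟩ := cons_append_singleton_inj (hQ'.symm.trans hQ)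
  exact creduced_cyc_append ((h𝒲.2 _ rfl).infix (suffix_append U V₁).isInfix)
    ((h𝒵.2 _ rfl).infix (suffix_append U' W₁).isInfix) hV₀ hV₁ hW₀ hW₁ (Letter.ne_bar_comm hpq) hqp

/-- For reduced cyclic words `𝒲`, `𝒵` and
`(P,Q) ∈ 𝕃ℙ₂(𝒲,𝒵)`, the cyclic word `γ(P,Q)` is non-empty and reduced. -/
theorem gamma_reduced (n : ℕ) (𝒪 𝒲 𝒵 : CWord n) (h𝒪 : SurfaceSymbol 𝒪)
    (hW : CReduced 𝒲) (hZ : CReduced 𝒵) (P Q : Word n) (h : LP2 𝒪 𝒲 𝒵 P Q)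
    (G : CWord n) (hG : GammaPair 𝒪 𝒲 𝒵 P Q G) :
    G ≠ Cycle.nil ∧ CReduced G := by
  obtain ⟨⟨hP, hQ, -⟩, -⟩ := h
  have hred : CReduced G :=
    hG.elim (GammaPair12.creduced h𝒪 hW hZ hP hQ) (GammaPair3.creduced hW hZ)
  exact ⟨hred.1, hred⟩

end CyclicWords
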